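/- In the generalized majority vote algorithm, for the stored key K at the end of the stream, the counter satisfies C ≤ S(K): the stored key's true sum is at least the final indicator counter value. -/
import Mathlib


/-- State of a bucket in MV-Sketch: total value `V`, candidate key `K`,
indicator counter `C`. -/
structure Bucket (α : Type*) where
  V : ℝ
  K : α
  C : ℝ

/-- One update of the generalized majority vote algorithm on input `(y, v)`. -/
noncomputable def Bucket.step {α : Type*} [DecidableEq α] (b : Bucket α) (p : α × ℝ) :
    Bucket α :=
  if p.1 = b.K then ⟨b.V + p.2, b.K, b.C + p.2⟩
  else if b.C - p.2 < 0 then ⟨b.V + p.2, p.1, p.2 - b.C⟩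
  else ⟨b.V + p.2, b.K, b.C - p.2⟩

/-- State of the bucket after processing the whole stream `l`, starting from
an arbitrary initial key `k0`, `V = 0`, `C = 0`. -/
noncomputable def runBucket {α : Type*} [DecidableEq α] (k0 : α) (l : List (α × ℝ)) :
    Bucket α :=
  l.foldl Bucket.step ⟨0, k0, 0⟩

/-- Total value of flow `x` in the stream `l`. -/
def flowSum {α : Type*} [DecidableEq α] (x : α) (l : List (α × ℝ)) : ℝ :=
  ((l.filter fun p => p.1 = x).map Prod.snd).sum

lemma flowSum_cons {α : Type*} [DecidableEq α] (x : α) (p : α × ℝ) (l : List (α × ℝ)) :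
    flowSum x (p :: l) = (if p.1 = x then p.2 else 0) + flowSum x l := by
  simp [flowSum, List.filter_cons]
  split <;> simp

lemma key_lemma {α : Type*} [DecidableEq α] :
    ∀ (l : List (α × ℝ)) (b : Bucket α), (∀ p ∈ l, 0 ≤ p.2) → 0 ≤ b.C →
      0 ≤ (l.foldl Bucket.step b).C ∧
      (l.foldl Bucket.step b).C ≤
        (if (l.foldl Bucket.step b).K = b.K then b.C else 0) +
          flowSum (l.foldl Bucket.step b).K l := by
  intro l
  induction l with
  | nil => intro b _ hb; simpa [flowSum]
  | cons p t ih =>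
    intro b hv hb
    have hp : (0:ℝ) ≤ p.2 := hv p (by simp)
    have hv' : ∀ q ∈ t, 0 ≤ q.2 := fun q hq => hv q (by simp [hq])
    simp only [List.foldl_cons]
    by_cases h1 : p.1 = b.K
    · have hb1 : Bucket.step b p = ⟨b.V + p.2, b.K, b.C + p.2⟩ := by
        simp [Bucket.step, h1]
      simp only [hb1]
      obtain ⟨h0, hle⟩ := ih ⟨b.V + p.2, b.K, b.C + p.2⟩ hv' (by positivity)
      refine ⟨h0, ?_⟩
      rw [flowSum_cons]
      refine hle.trans ?_
      clear ih h0 hle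
      split_ifs <;> simp_all <;> linarith
    · by_cases h2 : b.C - p.2 < 0
      · have hb1 : Bucket.step b p = ⟨b.V + p.2, p.1, p.2 - b.C⟩ := by
          simp [Bucket.step, h1, h2]
        simp only [hb1]
        obtain ⟨h0, hle⟩ := ih ⟨b.V + p.2, p.1, p.2 - b.C⟩ hv' (by simp; linarith)
        refine ⟨h0, ?_⟩
        rw [flowSum_cons]
        refine hle.trans ?_
        clear ih h0 hle
        split_ifs <;> dsimp only at * <;>
          first
            | linarith
            | (rename_i hA hB hC; exact absurd hA.symm hC)
            | (rename_i hA hC; exact absurd hA.symm hC)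
      · have hb1 : Bucket.step b p = ⟨b.V + p.2, b.K, b.C - p.2⟩ := by
          simp [Bucket.step, h1, h2]
        simp only [hb1]
        obtain ⟨h0, hle⟩ := ih ⟨b.V + p.2, b.K, b.C - p.2⟩ hv' (by simp; linarith)
        refine ⟨h0, ?_⟩
        rw [flowSum_cons]
        refine hle.trans ?_
        clear ih h0 hle
        split_ifs <;> simp_all <;> linarith
/-- At the end of the stream, the indicator counter is at most the true sum of
the stored key: `C ≤ S(K)`. -/
theorem counter_le_sum_of_stored_key {α : Type*} [DecidableEq α]
    (k0 : α) (l : List (α × ℝ)) (hv : ∀ p ∈ l, 0 ≤ p.2) :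
    (runBucket k0 l).C ≤ flowSum (runBucket k0 l).K l := by
  have h := key_lemma l (⟨0, k0, 0⟩ : Bucket α) hv le_rfl
  have := h.2
  simp only [runBucket]
  split at this <;> simpa using this
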